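/- Let P be a path of π and let e_1, e_2, …, e_k be all the elements of P whose extended rank is defined, listed in the order in which they appear on the path (from start to end). Then the sequence of their extended ranks is strictly decreasing. -/

import Mathlib

/-!
On a path every level `E_r` is a sublist of the path, and `π_r` moves to the next element of that
sublist, so all the maps `π_r` preserve the order along the path. Hence an ascent
`i_1, …, i_{r+1}` from a later start stays strictly ahead of the ascent from an earlier start, and
the descending half of a staircase, if it exists from some element of `E_r`, exists from every
earlier element of `E_r`. Together these pull an almost staircase of size `t + 1` from a later
element back to any earlier element whose ascent reaches `E_{t+1}`, so the rank cannot increase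
along the path. If the ranks agree, equal to
`t`, then climbing one more level from the top of the staircase of `i` lands no later than the top
of the staircase of `i'`, which gives `i` a half staircase of size `t + 1`; while a half staircase
of size `t + 1` from `i'` would pull back to an almost staircase of size `t + 1` from `i`,
contradicting the bestness of the staircase of `i`.
-/

/-- The `b`-local minima of a path, represented as the list of values (in path order):
a position is kept iff its value is smaller than all values at distance at most `b` in the
list, comparisons with out-of-range (undefined) positions being disregarded. -/
def pmins (b : ℕ) (l : List ℕ) : List ℕ :=
  (List.range l.length).filterMap fun p =>
    if ∀ q ∈ List.range l.length, q ≠ p → p ≤ q + b → q ≤ p + b → l.getD p 0 < l.getD q 0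
    then some (l.getD p 0) else none

/-- `plevel b l r` is the list of elements of `E_{r+1}` of the path `l` (0-indexed:
`plevel b l 0 = l` is `E_1`), in path order. -/
def plevel (b : ℕ) (l : List ℕ) : ℕ → List ℕ
  | 0 => l
  | r + 1 => pmins b (plevel b l r)

/-- Advance `s` steps along the (level) list `l` from the element with value `v`;
`none` if undefined (i.e. `v ∉ l` or the advance would run past the end of the path). -/
def padv (s : ℕ) (l : List ℕ) (v : ℕ) : Option ℕ :=
  if v ∈ l ∧ l.idxOf v + s < l.length then some (l.getD (l.idxOf v + s) 0) else none

/-- Retreat `s` steps along the (level) list `l` from the element with value `v`;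
`none` if undefined. -/
def pret (s : ℕ) (l : List ℕ) (v : ℕ) : Option ℕ :=
  if v ∈ l ∧ s ≤ l.idxOf v then some (l.getD (l.idxOf v - s) 0) else none

/-- `iSeqP b l i k` is the element `i_{k+1}` of the (tentative) `b`-staircase from `i` on the
path `l`: `i_1 = i` and `i_{k+1} = π_k^b(i_k)`; `none` if undefined. -/
def iSeqP (b : ℕ) (l : List ℕ) (i : ℕ) : ℕ → Option ℕ
  | 0 => if i ∈ l then some i else none
  | k + 1 => (iSeqP b l i k).bind (padv b (plevel b l k))

/-- `jSeqP b l r m q` is the element `j_{r+1-q}` of the descending part of the `b`-staircase of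
size `r` with middle `m` on the path `l`: `j_{r+1} = m` and `j_k = π_k^b(j_{k+1})`. -/
def jSeqP (b : ℕ) (l : List ℕ) (r m : ℕ) : ℕ → Option ℕ
  | 0 => some m
  | q + 1 => (jSeqP b l r m q).bind (padv b (plevel b l (r - (q + 1))))

/-- There is a `b`-staircase of size `r` from `i` on the path `l`. -/
def IsStaircaseP (b : ℕ) (l : List ℕ) (r i : ℕ) : Prop :=
  ∃ m, iSeqP b l i r = some m ∧ m ∈ plevel b l r ∧ (jSeqP b l r m r).isSome

/-- There is an almost `b`-staircase of size `r` from `i` on the path `l`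
(membership in `E_k` required only for `k ∈ [r]`). -/
def IsAlmostP (b : ℕ) (l : List ℕ) (r i : ℕ) : Prop :=
  ∃ m, iSeqP b l i r = some m ∧ (jSeqP b l r m r).isSome

/-- The `b`-staircase of size `r` from `i` is the best one: on a path every almost
`b`-staircase is proper, so `i` has no almost `b`-staircase of size `r+1`. -/
def IsBestP (b : ℕ) (l : List ℕ) (r i : ℕ) : Prop :=
  IsStaircaseP b l r i ∧ ¬ IsAlmostP b l (r + 1) i

/-- There is a half `b`-staircase of size `r` from `i` on the path `l`:
`i_1 = i, …, i_{r+1} = m = j_r, j_{r-1}, …, j_1`. -/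
def IsHalfP (b : ℕ) (l : List ℕ) (r i : ℕ) : Prop :=
  ∃ m, iSeqP b l i r = some m ∧ (jSeqP b l (r - 1) m (r - 1)).isSome

/-- `ExtRank b l i v` says that the extended rank of `i` on the path `l` is `(t, h)`,
encoded (lexicographically faithfully) as the natural number `v = 2t + h`, where `t` is the
rank of `i` (the size of the best staircase from `i`) and `h` records whether a half staircase
of size `t+1` from `i` exists. -/
def ExtRank (b : ℕ) (l : List ℕ) (i v : ℕ) : Prop :=
  ∃ t, IsBestP b l t i ∧
    ((IsHalfP b l (t + 1) i ∧ v = 2 * t + 1) ∨ (¬ IsHalfP b l (t + 1) i ∧ v = 2 * t))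

/-- `len(u,w) = min{k > 0 : π^k(u) = w}` (0 if unreachable). -/
noncomputable def lenTo {n : ℕ} (π : Equiv.Perm (Fin n)) (u w : Fin n) : ℕ :=
  letI := Classical.propDecidable
  if h : ∃ k, 0 < k ∧ (⇑π)^[k] u = w then Nat.find h else 0

/-- The path obtained from the cycle of `π` containing `x` by cutting before `π(x)`
(i.e. setting `π(x) := ⊥`), as the list of its elements (values) in path order:
it starts at `π(x)` and ends at `x`. -/
noncomputable def pathOf {n : ℕ} (π : Equiv.Perm (Fin n)) (x : Fin n) : List ℕ :=
  (List.range (lenTo π x x)).map fun j => ((⇑π)^[j + 1] x).val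

namespace List

theorem filterMap_sublist_map {α β : Type*} {f : α → Option β} {g : α → β}
    (h : ∀ a b, f a = some b → b = g a) (l : List α) : l.filterMap f <+ l.map g := by
  induction l with
  | nil => simp
  | cons a l ih =>
    rw [filterMap_cons, map_cons]
    cases hfa : f a with
    | none => exact ih.cons _
    | some b => rw [h a b hfa]; exact ih.cons_cons _

theorem map_getD_range {α : Type*} (l : List α) (d : α) :
    (range l.length).map (fun p => l.getD p d) = l := by
  apply ext_getElem (by simp)
  intro i _ h
  simp [getElem?_eq_getElem h]

variable {α : Type*} [BEq α] [LawfulBEq α] {s t : List α} {u w : α}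

theorem Sublist.idxOf_lt_idxOf (h : s <+ t) (ht : t.Nodup) (hu : u ∈ s) (hw : w ∈ s)
    (hlt : s.idxOf u < s.idxOf w) : t.idxOf u < t.idxOf w := by
  induction h with
  | slnil => simp at hu
  | @cons s t a h ih =>
    have ha : a ∉ t := (nodup_cons.1 ht).1
    rw [idxOf_cons_ne _ (ne_of_mem_of_not_mem (h.subset hu) ha).symm,
      idxOf_cons_ne _ (ne_of_mem_of_not_mem (h.subset hw) ha).symm]
    exact Nat.succ_lt_succ (ih (nodup_cons.1 ht).2 hu hw hlt)
  | @cons_cons s t a h ih =>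
    rcases eq_or_ne a u with rfl | hau <;> rcases eq_or_ne a w with rfl | haw
    · exact absurd hlt (lt_irrefl _)
    · rw [idxOf_cons_self, idxOf_cons_ne _ haw]
      exact Nat.succ_pos _
    · rw [idxOf_cons_self] at hlt
      exact absurd hlt (Nat.not_lt_zero _)
    · rw [idxOf_cons_ne _ hau, idxOf_cons_ne _ haw] at hlt ⊢
      exact Nat.succ_lt_succ <| ih (nodup_cons.1 ht).2 ((mem_cons.1 hu).resolve_left hau.symm)
        ((mem_cons.1 hw).resolve_left haw.symm) (Nat.lt_of_succ_lt_succ hlt)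

theorem Sublist.idxOf_lt_idxOf_iff (h : s <+ t) (ht : t.Nodup) (hu : u ∈ s) (hw : w ∈ s) :
    s.idxOf u < s.idxOf w ↔ t.idxOf u < t.idxOf w := by
  refine ⟨h.idxOf_lt_idxOf ht hu hw, fun hlt => ?_⟩
  rcases lt_trichotomy (s.idxOf u) (s.idxOf w) with hs | hs | hs
  · exact hs
  · rw [idxOf_inj hu] at hs
    subst hs
    exact absurd hlt (lt_irrefl _)
  · exact absurd (h.idxOf_lt_idxOf ht hw hu hs) (lt_asymm hlt)

theorem Sublist.idxOf_le_idxOf_iff (h : s <+ t) (ht : t.Nodup) (hu : u ∈ s) (hw : w ∈ s) :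
    s.idxOf u ≤ s.idxOf w ↔ t.idxOf u ≤ t.idxOf w := by
  simpa only [not_lt] using (h.idxOf_lt_idxOf_iff ht hw hu).not
end List

open scoped List

theorem lenTo_self_le_minimalPeriod {n : ℕ} (π : Equiv.Perm (Fin n)) (x : Fin n) :
    lenTo π x x ≤ Function.minimalPeriod π x := by
  unfold lenTo
  split_ifs with h
  · exact @Nat.find_min' _ (fun _ => Classical.propDecidable _) h _
      ⟨Function.minimalPeriod_pos_of_mem_periodicPts h, Function.iterate_minimalPeriod⟩
  · exact Nat.zero_le _

theorem pathOf_nodup {n : ℕ} (π : Equiv.Perm (Fin n)) (x : Fin n) : (pathOf π x).Nodup := by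
  refine List.Nodup.map_on (fun j hj k hk hjk => ?_) List.nodup_range
  rw [List.mem_range] at hj hk
  refine Function.iterate_injOn_Iio_minimalPeriod (hj.trans_le (lenTo_self_le_minimalPeriod π x))
    (hk.trans_le (lenTo_self_le_minimalPeriod π x)) (π.injective ?_)
  simpa only [Function.iterate_succ_apply'] using Fin.val_injective hjk

section Staircases

variable {s b : ℕ} {L l : List ℕ} {u w u₁ w₁ i i' m m' r t t' v v' : ℕ}

theorem padv_eq_some_iff (hL : L.Nodup) :
    padv s L u = some w ↔ u ∈ L ∧ w ∈ L ∧ L.idxOf w = L.idxOf u + s := by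
  unfold padv
  constructor
  · intro h
    split_ifs at h with hu
    obtain rfl := Option.some.inj h
    rw [List.getD_eq_getElem _ _ hu.2]
    exact ⟨hu.1, List.getElem_mem _, hL.idxOf_getElem _ _⟩
  · rintro ⟨hu, hw, hidx⟩
    have hlt : L.idxOf w < L.length := List.idxOf_lt_length_iff.2 hw
    rw [if_pos ⟨hu, hidx ▸ hlt⟩, List.getD_eq_getElem _ _ (hidx ▸ hlt)]
    simp only [← hidx, List.getElem_idxOf]

theorem pmins_sublist (b : ℕ) (l : List ℕ) : pmins b l <+ l := by
  conv_rhs => rw [← List.map_getD_range l 0]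
  refine List.filterMap_sublist_map (fun p v hv => ?_) _
  split_ifs at hv
  exact (Option.some.inj hv).symm

theorem plevel_succ_sublist (b : ℕ) (l : List ℕ) (r : ℕ) : plevel b l (r + 1) <+ plevel b l r :=
  pmins_sublist b _

theorem plevel_sublist (b : ℕ) (l : List ℕ) : ∀ r, plevel b l r <+ l
  | 0 => List.Sublist.refl l
  | r + 1 => (plevel_succ_sublist b l r).trans (plevel_sublist b l r)

theorem plevel_nodup (hl : l.Nodup) (r : ℕ) : (plevel b l r).Nodup :=
  (plevel_sublist b l r).nodup hl

theorem exists_padv_of_idxOf_add_le (hL : L.Nodup) (hu : u ∈ L) (hw : w ∈ L)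
    (h : L.idxOf u + s ≤ L.idxOf w) :
    ∃ u₁, padv s L u = some u₁ ∧ u₁ ∈ L ∧ L.idxOf u₁ ≤ L.idxOf w := by
  have hlt : L.idxOf u + s < L.length := h.trans_lt (List.idxOf_lt_length_iff.2 hw)
  refine ⟨L[L.idxOf u + s], (padv_eq_some_iff hL).2 ⟨hu, List.getElem_mem _, ?_⟩,
    List.getElem_mem _, ?_⟩ <;> rw [hL.idxOf_getElem]
  exact h

theorem exists_padv_le_padv (hL : L <+ l) (hl : l.Nodup) (hu : u ∈ L)
    (hw : padv s L w = some w₁) (h : l.idxOf u ≤ l.idxOf w) :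
    ∃ u₁, padv s L u = some u₁ ∧ u₁ ∈ L ∧ l.idxOf u₁ ≤ l.idxOf w₁ := by
  have hLn := hL.nodup hl
  obtain ⟨hwL, hw₁L, hw₁⟩ := (padv_eq_some_iff hLn).1 hw
  rw [← hL.idxOf_le_idxOf_iff hl hu hwL] at h
  obtain ⟨u₁, hu₁, hu₁L, hle⟩ := exists_padv_of_idxOf_add_le (s := s) hLn hu hw₁L (by omega)
  exact ⟨u₁, hu₁, hu₁L, (hL.idxOf_le_idxOf_iff hl hu₁L hw₁L).1 hle⟩

theorem exists_padv_one_le (hL : L <+ l) (hl : l.Nodup) (hu : u ∈ L) (hw : w ∈ L)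
    (h : l.idxOf u < l.idxOf w) :
    ∃ u₁, padv 1 L u = some u₁ ∧ u₁ ∈ L ∧ l.idxOf u₁ ≤ l.idxOf w := by
  rw [← hL.idxOf_lt_idxOf_iff hl hu hw] at h
  obtain ⟨u₁, hu₁, hu₁L, hle⟩ := exists_padv_of_idxOf_add_le (s := 1) (hL.nodup hl) hu hw h
  exact ⟨u₁, hu₁, hu₁L, (hL.idxOf_le_idxOf_iff hl hu₁L hw).1 hle⟩

theorem padv_lt_padv (hL : L <+ l) (hl : l.Nodup) (hu : padv s L u = some u₁)
    (hw : padv s L w = some w₁) (h : l.idxOf u < l.idxOf w) : l.idxOf u₁ < l.idxOf w₁ := by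
  have hLn := hL.nodup hl
  obtain ⟨huL, hu₁L, hu₁⟩ := (padv_eq_some_iff hLn).1 hu
  obtain ⟨hwL, hw₁L, hw₁⟩ := (padv_eq_some_iff hLn).1 hw
  rw [← hL.idxOf_lt_idxOf_iff hl huL hwL] at h
  rw [← hL.idxOf_lt_idxOf_iff hl hu₁L hw₁L]
  omega

theorem iSeqP_zero_eq_some_iff : iSeqP b l i 0 = some m ↔ i ∈ l ∧ i = m := by
  simp [iSeqP]

theorem iSeqP_succ_eq_some_iff {k : ℕ} :
    iSeqP b l i (k + 1) = some m ↔ ∃ y, iSeqP b l i k = some y ∧ padv b (plevel b l k) y = some m :=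
  Option.bind_eq_some_iff

theorem iSeqP_lt_iSeqP (hl : l.Nodup) (k : ℕ) (h : l.idxOf i < l.idxOf i')
    (hm : iSeqP b l i k = some m) (hm' : iSeqP b l i' k = some m') : l.idxOf m < l.idxOf m' := by
  induction k generalizing m m' with
  | zero =>
    obtain ⟨-, rfl⟩ := iSeqP_zero_eq_some_iff.1 hm
    obtain ⟨-, rfl⟩ := iSeqP_zero_eq_some_iff.1 hm'
    exact h
  | succ k ih =>
    obtain ⟨y, hy, hym⟩ := iSeqP_succ_eq_some_iff.1 hm
    obtain ⟨y', hy', hym'⟩ := iSeqP_succ_eq_some_iff.1 hm'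
    exact padv_lt_padv (plevel_sublist b l k) hl hym hym' (ih hy hy')

theorem jSeqP_succ_succ (l : List ℕ) (r m q : ℕ) :
    jSeqP b l (r + 1) m (q + 1) = (padv b (plevel b l r) m).bind (fun m₁ => jSeqP b l r m₁ q) := by
  induction q with
  | zero => simp [jSeqP]
  | succ q ih =>
    rw [jSeqP, ih, Option.bind_assoc, show r + 1 - (q + 1 + 1) = r - (q + 1) by omega]
    rfl

theorem isSome_jSeqP_succ_iff :
    (jSeqP b l (r + 1) m (r + 1)).isSome ↔
      ∃ m₁, padv b (plevel b l r) m = some m₁ ∧ (jSeqP b l r m₁ r).isSome := by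
  rw [jSeqP_succ_succ]
  cases padv b (plevel b l r) m <;> simp

theorem isSome_jSeqP_succ_of_le {r u w : ℕ} (hl : l.Nodup) (hu : u ∈ plevel b l r)
    (hle : l.idxOf u ≤ l.idxOf w) (hw : (jSeqP b l (r + 1) w (r + 1)).isSome) :
    (jSeqP b l (r + 1) u (r + 1)).isSome := by
  rw [isSome_jSeqP_succ_iff] at hw ⊢
  obtain ⟨w₁, hw₁, hd⟩ := hw
  obtain ⟨u₁, hu₁, hu₁L, hle₁⟩ := exists_padv_le_padv (plevel_sublist b l r) hl hu hw₁ hle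
  refine ⟨u₁, hu₁, ?_⟩
  cases r with
  | zero => rfl
  | succ r => exact isSome_jSeqP_succ_of_le hl ((plevel_succ_sublist b l r).subset hu₁L) hle₁ hd

theorem isSome_jSeqP_of_le (hl : l.Nodup) (hu : u ∈ plevel b l r)
    (hle : l.idxOf u ≤ l.idxOf w) (hw : (jSeqP b l r w r).isSome) : (jSeqP b l r u r).isSome := by
  cases r with
  | zero => rfl
  | succ r => exact isSome_jSeqP_succ_of_le hl ((plevel_succ_sublist b l r).subset hu) hle hw

theorem IsAlmostP.of_succ (hl : l.Nodup) (h : IsAlmostP b l (r + 1) i) : IsAlmostP b l r i := by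
  obtain ⟨z, hz, hd⟩ := h
  obtain ⟨y, hy, hyz⟩ := iSeqP_succ_eq_some_iff.1 hz
  obtain ⟨w₁, hzw₁, hd₁⟩ := isSome_jSeqP_succ_iff.1 hd
  obtain ⟨hyL, -, hzy⟩ := (padv_eq_some_iff (plevel_nodup hl r)).1 hyz
  obtain ⟨-, hw₁L, hw₁z⟩ := (padv_eq_some_iff (plevel_nodup hl r)).1 hzw₁
  refine ⟨y, hy, isSome_jSeqP_of_le hl hyL ?_ hd₁⟩
  rw [← (plevel_sublist b l r).idxOf_le_idxOf_iff hl hyL hw₁L]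
  omega

theorem IsAlmostP.mono (hl : l.Nodup) (hrt : r ≤ t) (h : IsAlmostP b l t i) :
    IsAlmostP b l r i := by
  induction hrt with
  | refl => exact h
  | step _ ih => exact ih (h.of_succ hl)

theorem IsAlmostP.of_idxOf_lt (hl : l.Nodup) (hii : l.idxOf i < l.idxOf i')
    (hm : iSeqP b l i r = some m) (hmL : m ∈ plevel b l r) (h : IsAlmostP b l (r + 1) i') :
    IsAlmostP b l (r + 1) i := by
  obtain ⟨m'', hm'', hd⟩ := h
  obtain ⟨y', hy', hy'm''⟩ := iSeqP_succ_eq_some_iff.1 hm''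
  obtain ⟨M, hM, hML, hMm''⟩ := exists_padv_le_padv (plevel_sublist b l r) hl hmL hy'm''
    (iSeqP_lt_iSeqP hl r hii hm hy').le
  exact ⟨M, iSeqP_succ_eq_some_iff.2 ⟨m, hm, hM⟩, isSome_jSeqP_succ_of_le hl hML hMm'' hd⟩

theorem IsBestP.le_of_isStaircaseP (hl : l.Nodup) (hii : l.idxOf i < l.idxOf i')
    (h : IsBestP b l t i) (h' : IsStaircaseP b l t' i') : t' ≤ t := by
  obtain ⟨⟨m, hm, hmL, -⟩, hna⟩ := h
  obtain ⟨m', hm', -, hd'⟩ := h'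
  by_contra! htt
  exact hna (IsAlmostP.of_idxOf_lt hl hii hm hmL (IsAlmostP.mono hl htt ⟨m', hm', hd'⟩))

/-- One step of `π_{t+1}` from `m` cannot overtake the later element `m'` of the same level. -/
theorem exists_iSeqP_succ_le (hl : l.Nodup) (hii : l.idxOf i < l.idxOf i')
    (hm : iSeqP 1 l i t = some m) (hmL : m ∈ plevel 1 l t)
    (hm' : iSeqP 1 l i' t = some m') (hm'L : m' ∈ plevel 1 l t) :
    ∃ M, iSeqP 1 l i (t + 1) = some M ∧ M ∈ plevel 1 l t ∧ l.idxOf M ≤ l.idxOf m' := by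
  obtain ⟨M, hM, hML, hMm'⟩ :=
    exists_padv_one_le (plevel_sublist 1 l t) hl hmL hm'L (iSeqP_lt_iSeqP hl t hii hm hm')
  exact ⟨M, iSeqP_succ_eq_some_iff.2 ⟨m, hm, hM⟩, hML, hMm'⟩

theorem IsStaircaseP.isHalfP_succ_of_idxOf_lt (hl : l.Nodup) (hii : l.idxOf i < l.idxOf i')
    (h : IsStaircaseP 1 l t i) (h' : IsStaircaseP 1 l t i') : IsHalfP 1 l (t + 1) i := by
  obtain ⟨m, hm, hmL, -⟩ := h
  obtain ⟨m', hm', hm'L, hd'⟩ := h'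
  obtain ⟨M, hM, hML, hMm'⟩ := exists_iSeqP_succ_le hl hii hm hmL hm' hm'L
  exact ⟨M, hM, isSome_jSeqP_of_le hl hML hMm' hd'⟩

theorem IsBestP.not_isHalfP_succ_of_idxOf_lt (hl : l.Nodup) (hii : l.idxOf i < l.idxOf i')
    (h : IsBestP 1 l t i) (h' : IsStaircaseP 1 l t i') : ¬ IsHalfP 1 l (t + 1) i' := by
  rintro ⟨m₂, hm₂, hd₂⟩
  obtain ⟨⟨m, hm, hmL, -⟩, hna⟩ := h
  obtain ⟨m', hm', hm'L, -⟩ := h'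
  obtain ⟨y, hy, hym₂⟩ := iSeqP_succ_eq_some_iff.1 hm₂
  obtain rfl : y = m' := Option.some.inj (hy.symm.trans hm')
  obtain ⟨M, hM, hML, hMm'⟩ := exists_iSeqP_succ_le hl hii hm hmL hm' hm'L
  exact hna ⟨M, hM, isSome_jSeqP_succ_of_le hl hML hMm' (isSome_jSeqP_succ_iff.2 ⟨m₂, hym₂, hd₂⟩)⟩

theorem ExtRank.lt_of_idxOf_lt (hl : l.Nodup) (hii : l.idxOf i < l.idxOf i')
    (hv : ExtRank 1 l i v) (hv' : ExtRank 1 l i' v') : v' < v := by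
  obtain ⟨t, hbest, hhalf⟩ := hv
  obtain ⟨t', hbest', hhalf'⟩ := hv'
  rcases (hbest.le_of_isStaircaseP hl hii hbest'.1).lt_or_eq with htt | rfl
  · rcases hhalf with ⟨-, rfl⟩ | ⟨-, rfl⟩ <;> rcases hhalf' with ⟨-, rfl⟩ | ⟨-, rfl⟩ <;> omega
  · have hv : v = 2 * t' + 1 :=
      (hhalf.resolve_right fun h => h.1 (hbest.1.isHalfP_succ_of_idxOf_lt hl hii hbest'.1)).2
    have hv' : v' = 2 * t' :=
      (hhalf'.resolve_left fun h => hbest.not_isHalfP_succ_of_idxOf_lt hl hii hbest'.1 h.1).2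
    omega

end Staircases

/-- (Fich et al., `b = 1`.)  Let `P` be a path of `π` and consider the
elements of `P` whose extended rank is defined, in path order.  Then the sequence of their
extended ranks is strictly decreasing: if position `p` precedes position `q` on `P` and both
carry extended ranks `vp`, `vq` (encoded as `2t + h`, lexicographic order), then `vq < vp`. -/
theorem extended_ranks_strictly_decreasing (n : ℕ) (π : Equiv.Perm (Fin n)) (x : Fin n)
    (P : List ℕ) (hP : P = pathOf π x)
    (p q : ℕ) (hpq : p < q) (hq : q < P.length)
    (vp vq : ℕ) (hvp : ExtRank 1 P (P.getD p 0) vp) (hvq : ExtRank 1 P (P.getD q 0) vq) :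
    vq < vp := by
  have hl : P.Nodup := hP ▸ pathOf_nodup π x
  refine ExtRank.lt_of_idxOf_lt hl ?_ hvp hvq
  rwa [List.getD_eq_getElem _ _ (hpq.trans hq), List.getD_eq_getElem _ _ hq, hl.idxOf_getElem,
    hl.idxOf_getElem]
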